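/- arXiv:1109.4194 — 3 statements merged into one kernel-verified Lean document; each statement's English description precedes it below -/
import Mathlib

section
/- Let f, g : [1,∞) → ℂ be absolutely continuous, vanishing at r = 1 and at infinity, with f', g' ∈ L²([1,∞), r² dr). Then the product fg satisfies ‖(fg)'‖_{L²(r²dr)} ≤ C (‖f'‖_{L²(r²dr)} + ‖g'‖_{L²(r²dr)})(‖f'‖_{L²(r²dr)} + ‖g'‖_{L²(r²dr)}) for some absolute constant C; i.e., the radial homogeneous Sobolev space Ḣ¹₀(Ω) on Ω = ℝ³ \ B(0,1) is an algebra under pointwise multiplication. -/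
open MeasureTheory Filter Set Topology

/-!
A radial function with `f' ∈ L²(r² dr)` on `(1, ∞)` that vanishes at infinity is bounded:
`f r = -∫_r^∞ f'`, and Cauchy–Schwarz against `s⁻¹ ∈ L²(r, ∞)` gives
`√r ‖f r‖ ≤ ‖f'‖_{L²(s² ds)}`. By the Leibniz rule `‖(fg)'‖ ≤ ‖f'‖ sup ‖g‖ + sup ‖f‖ ‖g'‖`,
hence `‖(fg)'‖_{L²(r² dr)} ≤ 2 ‖f'‖ ‖g'‖ ≤ (‖f'‖ + ‖g'‖)²`.
-/

namespace RadialSobolev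

theorem rpow_neg_two_eq_inv_sq {s : ℝ} (hs : 0 ≤ s) : s ^ (-2 : ℝ) = s⁻¹ ^ 2 := by
  rw [Real.rpow_neg hs, Real.rpow_two, inv_pow]

theorem memLp_two_inv_Ioi {r : ℝ} (hr : 0 < r) :
    MemLp (fun s : ℝ => s⁻¹) 2 (volume.restrict (Ioi r)) := by
  refine (memLp_two_iff_integrable_sq measurable_inv.aestronglyMeasurable).mpr ?_
  refine (integrableOn_Ioi_rpow_of_lt (by norm_num : (-2 : ℝ) < -1) hr).congr_fun
    (fun s hs => rpow_neg_two_eq_inv_sq (hr.trans hs).le) measurableSet_Ioi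

theorem integral_Ioi_inv_sq {r : ℝ} (hr : 0 < r) : ∫ s in Ioi r, s⁻¹ ^ 2 = r⁻¹ := by
  rw [← setIntegral_congr_fun measurableSet_Ioi
    (fun s hs => rpow_neg_two_eq_inv_sq (hr.trans (mem_Ioi.mp hs)).le),
    integral_Ioi_rpow_of_lt (by norm_num) hr]
  norm_num [Real.rpow_neg_one]

variable {u : ℝ → ℝ} {r : ℝ}

theorem memLp_two_mul_id_of_integrableOn_sq_mul_sq
    (hu : AEStronglyMeasurable u (volume.restrict (Ioi r)))
    (h : IntegrableOn (fun s => u s ^ 2 * s ^ 2) (Ioi r)) :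
    MemLp (fun s => u s * s) 2 (volume.restrict (Ioi r)) :=
  (memLp_two_iff_integrable_sq (hu.mul aestronglyMeasurable_id)).mpr
    (h.congr_fun (fun _ _ => (mul_pow _ _ _).symm) measurableSet_Ioi)

theorem integrableOn_Ioi_of_integrableOn_sq_mul_sq (hr : 0 < r)
    (hu : AEStronglyMeasurable u (volume.restrict (Ioi r)))
    (h : IntegrableOn (fun s => u s ^ 2 * s ^ 2) (Ioi r)) :
    IntegrableOn u (Ioi r) := by
  refine IntegrableOn.congr_fun ((memLp_two_mul_id_of_integrableOn_sq_mul_sq hu h).integrable_mul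
    (memLp_two_inv_Ioi hr)) (fun s hs => ?_) measurableSet_Ioi
  have : s ≠ 0 := (hr.trans hs).ne'
  simp [this]

theorem setIntegral_Ioi_le_of_integrableOn_sq_mul_sq (hr : 0 < r) (hu0 : ∀ s, 0 ≤ u s)
    (hu : AEStronglyMeasurable u (volume.restrict (Ioi r)))
    (h : IntegrableOn (fun s => u s ^ 2 * s ^ 2) (Ioi r)) :
    ∫ s in Ioi r, u s ≤ √(∫ s in Ioi r, u s ^ 2 * s ^ 2) / √r := by
  have hpos : ∀ᵐ s ∂volume.restrict (Ioi r), 0 < s :=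
    (ae_restrict_mem measurableSet_Ioi).mono fun s hs => hr.trans hs
  have holder := integral_mul_le_Lp_mul_Lq_of_nonneg Real.HolderConjugate.two_two
    (hpos.mono fun s hs => mul_nonneg (hu0 s) hs.le) (hpos.mono fun s hs => (inv_pos.2 hs).le)
    (by simpa using memLp_two_mul_id_of_integrableOn_sq_mul_sq hu h)
    (by simpa using memLp_two_inv_Ioi hr)
  calc ∫ s in Ioi r, u s = ∫ s in Ioi r, u s * s * s⁻¹ :=
        setIntegral_congr_fun measurableSet_Ioi fun s hs => by
          field_simp [(hr.trans (mem_Ioi.mp hs)).ne']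
    _ ≤ √(∫ s in Ioi r, u s ^ 2 * s ^ 2) * √(r⁻¹) := by
        simpa only [Real.rpow_two, mul_pow, integral_Ioi_inv_sq hr, ← Real.sqrt_eq_rpow]
          using holder
    _ = √(∫ s in Ioi r, u s ^ 2 * s ^ 2) / √r := by rw [Real.sqrt_inv, div_eq_mul_inv]


variable {E : Type*} [NormedAddCommGroup E] [NormedSpace ℝ E] [CompleteSpace E]
  {f f' : ℝ → E}

theorem sqrt_mul_norm_le_of_hasDerivAt (hr : 0 < r) (hf : ∀ s, r ≤ s → HasDerivAt f (f' s) s)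
    (hf0 : Tendsto f atTop (𝓝 0)) (hfi : IntegrableOn (fun s => ‖f' s‖ ^ 2 * s ^ 2) (Ioi r)) :
    √r * ‖f r‖ ≤ √(∫ s in Ioi r, ‖f' s‖ ^ 2 * s ^ 2) := by
  have hmeas : AEStronglyMeasurable f' (volume.restrict (Ioi r)) :=
    (aestronglyMeasurable_deriv f _).congr <|
      (ae_restrict_mem measurableSet_Ioi).mono fun s hs => (hf s (le_of_lt hs)).deriv
  have hint : IntegrableOn (fun s => ‖f' s‖) (Ioi r) :=
    integrableOn_Ioi_of_integrableOn_sq_mul_sq hr hmeas.norm hfi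
  have hftc : ∫ s in Ioi r, f' s = 0 - f r :=
    integral_Ioi_of_hasDerivAt_of_tendsto' (fun s hs => hf s hs)
      ((integrable_norm_iff hmeas).mp hint) hf0
  rw [mul_comm, ← le_div_iff₀ (Real.sqrt_pos.mpr hr)]
  calc ‖f r‖ = ‖∫ s in Ioi r, f' s‖ := by rw [hftc, zero_sub, norm_neg]
    _ ≤ ∫ s in Ioi r, ‖f' s‖ := norm_integral_le_integral_norm _
    _ ≤ _ := setIntegral_Ioi_le_of_integrableOn_sq_mul_sq hr (fun _ => norm_nonneg _)
        hmeas.norm hfi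

theorem norm_le_of_hasDerivAt_of_one_le (hf : ∀ s, 1 ≤ s → HasDerivAt f (f' s) s)
    (hf0 : Tendsto f atTop (𝓝 0)) (hfi : IntegrableOn (fun s => ‖f' s‖ ^ 2 * s ^ 2) (Ioi 1))
    (hr : 1 ≤ r) : ‖f r‖ ≤ √(∫ s in Ioi 1, ‖f' s‖ ^ 2 * s ^ 2) := by
  have hr0 : 0 < r := one_pos.trans_le hr
  calc ‖f r‖ ≤ √r * ‖f r‖ := le_mul_of_one_le_left (norm_nonneg _) (Real.one_le_sqrt.mpr hr)
    _ ≤ √(∫ s in Ioi r, ‖f' s‖ ^ 2 * s ^ 2) :=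
        sqrt_mul_norm_le_of_hasDerivAt hr0 (fun s hs => hf s (hr.trans hs)) hf0
          (hfi.mono_set (Ioi_subset_Ioi hr))
    _ ≤ √(∫ s in Ioi 1, ‖f' s‖ ^ 2 * s ^ 2) :=
        Real.sqrt_le_sqrt <| setIntegral_mono_set hfi (.of_forall fun _ => by positivity)
          (Ioi_subset_Ioi hr).eventuallyLE


theorem integral_norm_leibniz_sq_le {R : Type*} [NormedRing R] {f g f' g' : ℝ → R} {S : Set ℝ}
    {F G : ℝ} (hS : MeasurableSet S) (hfF : ∀ r ∈ S, ‖f r‖ ≤ F) (hgG : ∀ r ∈ S, ‖g r‖ ≤ G)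
    (hfi : IntegrableOn (fun r => ‖f' r‖ ^ 2 * r ^ 2) S)
    (hgi : IntegrableOn (fun r => ‖g' r‖ ^ 2 * r ^ 2) S) :
    ∫ r in S, ‖f' r * g r + f r * g' r‖ ^ 2 * r ^ 2 ≤
      2 * G ^ 2 * (∫ r in S, ‖f' r‖ ^ 2 * r ^ 2) + 2 * F ^ 2 * ∫ r in S, ‖g' r‖ ^ 2 * r ^ 2 := by
  have hpointwise : ∀ r ∈ S, ‖f' r * g r + f r * g' r‖ ^ 2 * r ^ 2 ≤
      2 * G ^ 2 * (‖f' r‖ ^ 2 * r ^ 2) + 2 * F ^ 2 * (‖g' r‖ ^ 2 * r ^ 2) := by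
    intro r hr
    have hleibniz : ‖f' r * g r + f r * g' r‖ ≤ ‖f' r‖ * G + F * ‖g' r‖ :=
      calc _ ≤ ‖f' r‖ * ‖g r‖ + ‖f r‖ * ‖g' r‖ :=
            (norm_add_le _ _).trans (add_le_add (norm_mul_le _ _) (norm_mul_le _ _))
        _ ≤ ‖f' r‖ * G + F * ‖g' r‖ := by gcongr <;> simp_all
    have hsq := pow_le_pow_left₀ (norm_nonneg _) hleibniz 2
    have hamgm := two_mul_le_add_sq (‖f' r‖ * G) (F * ‖g' r‖)
    nlinarith [sq_nonneg r]
  rw [← integral_const_mul, ← integral_const_mul, ← integral_add (hfi.const_mul _) (hgi.const_mul _)]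
  exact integral_mono_of_nonneg (.of_forall fun _ => by positivity)
    ((hfi.const_mul _).add (hgi.const_mul _)) ((ae_restrict_iff' hS).mpr (.of_forall hpointwise))

end RadialSobolev

open RadialSobolev

/-- Radial `Ḣ¹₀(Ω)`, `Ω = ℝ³ \ B(0,1)`, is an algebra under multiplication. -/
theorem stmt_4 :
    ∃ C : ℝ, 0 < C ∧
      ∀ f g f' g' : ℝ → ℂ,
        (∀ r, 1 ≤ r → HasDerivAt f (f' r) r) →
        (∀ r, 1 ≤ r → HasDerivAt g (g' r) r) →
        f 1 = 0 → g 1 = 0 →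
        Tendsto f atTop (nhds 0) → Tendsto g atTop (nhds 0) →
        IntegrableOn (fun r => ‖f' r‖ ^ 2 * r ^ 2) (Ioi (1 : ℝ)) →
        IntegrableOn (fun r => ‖g' r‖ ^ 2 * r ^ 2) (Ioi (1 : ℝ)) →
        (∫ r in Ioi (1:ℝ), ‖f' r * g r + f r * g' r‖ ^ 2 * r ^ 2) ^ ((1:ℝ)/2) ≤
          C * ((∫ r in Ioi (1:ℝ), ‖f' r‖ ^ 2 * r ^ 2) ^ ((1:ℝ)/2) +
                (∫ r in Ioi (1:ℝ), ‖g' r‖ ^ 2 * r ^ 2) ^ ((1:ℝ)/2)) *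
              ((∫ r in Ioi (1:ℝ), ‖f' r‖ ^ 2 * r ^ 2) ^ ((1:ℝ)/2) +
                (∫ r in Ioi (1:ℝ), ‖g' r‖ ^ 2 * r ^ 2) ^ ((1:ℝ)/2)) := by
  refine ⟨1, one_pos, fun f g f' g' hf hg _ _ hf0 hg0 hfi hgi => ?_⟩
  simp only [← Real.sqrt_eq_rpow, one_mul]
  set A := ∫ r in Ioi (1:ℝ), ‖f' r‖ ^ 2 * r ^ 2
  set B := ∫ r in Ioi (1:ℝ), ‖g' r‖ ^ 2 * r ^ 2
  have hA : 0 ≤ A := setIntegral_nonneg measurableSet_Ioi fun _ _ => by positivity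
  have hB : 0 ≤ B := setIntegral_nonneg measurableSet_Ioi fun _ _ => by positivity
  have hprod := integral_norm_leibniz_sq_le measurableSet_Ioi
    (fun r hr => norm_le_of_hasDerivAt_of_one_le hf hf0 hfi (le_of_lt hr))
    (fun r hr => norm_le_of_hasDerivAt_of_one_le hg hg0 hgi (le_of_lt hr)) hfi hgi
  rw [Real.sq_sqrt hA, Real.sq_sqrt hB] at hprod
  calc _ ≤ √((2 * √A * √B) ^ 2) := Real.sqrt_le_sqrt <| hprod.trans_eq <| by
          rw [mul_pow, mul_pow, Real.sq_sqrt hA, Real.sq_sqrt hB]; ring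
    _ = 2 * √A * √B := Real.sqrt_sq (by positivity)
    _ ≤ (√A + √B) * (√A + √B) := by nlinarith [sq_nonneg (√A - √B)]
end

section
/- Let φ̂ : ℝ → ℂ be an even Schwartz function. Then there exists a constant C such that for all x > 0, ∫_0^∞ |φ̂(y+x) − φ̂(y−x)| · y dy ≤ C·x. -/
/-!
For `x ≥ 1` the bound is crude: `y ≤ x (1 + |y ± x|)`, so the integrand is dominated by
`x` times translates of the integrable function `(1 + |t|) ‖φ̂ t‖`, whose integral does not
depend on the shift. For `x ≤ 1` the mean value theorem on `[y - x, y + x]` gains the factor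
`2x`; on that interval `1 + y ≤ 2 (1 + |t|)`, so the decay `|φ̂' t| ≲ (1 + |t|)⁻³` leaves
`y (1 + y)⁻³ ≤ (1 + y²)⁻¹`, which is integrable.
-/

open MeasureTheory Set Real

theorem setIntegral_mono_on_of_nonneg {α : Type*} [MeasurableSpace α] {μ : Measure α}
    {s : Set α} {f g : α → ℝ} (hs : MeasurableSet s) (hg : IntegrableOn g s μ)
    (hf : ∀ a ∈ s, 0 ≤ f a) (hfg : ∀ a ∈ s, f a ≤ g a) :
    ∫ a in s, f a ∂μ ≤ ∫ a in s, g a ∂μ :=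
  integral_mono_of_nonneg (ae_restrict_of_forall_mem hs hf) hg (ae_restrict_of_forall_mem hs hfg)

variable {F : Type*} [NormedAddCommGroup F]

namespace SchwartzMap

variable [NormedSpace ℝ F]

theorem exists_one_add_abs_pow_mul_norm_deriv_le (f : 𝓢(ℝ, F)) (k : ℕ) :
    ∃ K, ∀ t : ℝ, (1 + |t|) ^ k * ‖deriv f t‖ ≤ K :=
  ⟨_, fun t => by
    simpa [norm_deriv_eq_norm_fderiv] using
      one_add_le_sup_seminorm_apply (𝕜 := ℝ) (m := (k, 1)) le_rfl le_rfl f t⟩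

theorem integrable_one_add_abs_mul_norm (f : 𝓢(ℝ, F)) :
    Integrable fun t : ℝ => (1 + |t|) * ‖f t‖ := by
  refine (f.integrable.norm.add (f.integrable_pow_mul volume 1)).congr (.of_forall fun t => ?_)
  simp only [Pi.add_apply, pow_one, Real.norm_eq_abs]
  ring

end SchwartzMap

section ShiftedDifference

variable {u : ℝ → F} {x y : ℝ}

theorem norm_sub_mul_le_of_one_le (hx : 1 ≤ x) (hy : 0 ≤ y) :
    ‖u (y + x) - u (y - x)‖ * y ≤
      x * ((1 + |y + x|) * ‖u (y + x)‖ + (1 + |y - x|) * ‖u (y - x)‖) := by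
  have hplus : y ≤ x * (1 + |y + x|) := by nlinarith [le_abs_self (y + x), abs_nonneg (y + x)]
  have hminus : y ≤ x * (1 + |y - x|) := by nlinarith [le_abs_self (y - x), abs_nonneg (y - x)]
  calc ‖u (y + x) - u (y - x)‖ * y ≤ ‖u (y + x)‖ * y + ‖u (y - x)‖ * y := by
        rw [← add_mul]; gcongr; exact norm_sub_le _ _
    _ ≤ ‖u (y + x)‖ * (x * (1 + |y + x|)) + ‖u (y - x)‖ * (x * (1 + |y - x|)) := by gcongr
    _ = _ := by ring

theorem setIntegral_norm_sub_mul_le_of_one_le (hu : Integrable fun t : ℝ => (1 + |t|) * ‖u t‖)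
    (hx : 1 ≤ x) :
    ∫ y in Ioi (0 : ℝ), ‖u (y + x) - u (y - x)‖ * y ≤ 2 * x * ∫ t, (1 + |t|) * ‖u t‖ := by
  set g := fun t : ℝ => (1 + |t|) * ‖u t‖
  have hg : Integrable fun y => x * (g (y + x) + g (y - x)) :=
    ((hu.comp_add_right x).add (hu.comp_sub_right x)).const_mul x
  calc ∫ y in Ioi (0 : ℝ), ‖u (y + x) - u (y - x)‖ * y
      ≤ ∫ y in Ioi (0 : ℝ), x * (g (y + x) + g (y - x)) :=
        setIntegral_mono_on_of_nonneg measurableSet_Ioi hg.integrableOn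
          (fun y hy => mul_nonneg (norm_nonneg _) (le_of_lt hy))
          (fun y hy => norm_sub_mul_le_of_one_le hx (le_of_lt hy))
    _ ≤ ∫ y, x * (g (y + x) + g (y - x)) :=
        setIntegral_le_integral hg (.of_forall fun y => by positivity)
    _ = 2 * x * ∫ t, g t := by
        rw [integral_const_mul, integral_add (hu.comp_add_right x) (hu.comp_sub_right x),
          integral_add_right_eq_self g x, integral_sub_right_eq_self g x]
        ring

variable [NormedSpace ℝ F]

theorem norm_sub_mul_le_of_le_one (hu : Differentiable ℝ u) {K : ℝ}
    (hK : ∀ t, (1 + |t|) ^ 3 * ‖deriv u t‖ ≤ K) (hx : 0 ≤ x) (hx1 : x ≤ 1) (hy : 0 ≤ y) :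
    ‖u (y + x) - u (y - x)‖ * y ≤ 16 * K * x * (1 + y ^ 2)⁻¹ := by
  have hK0 : 0 ≤ K := le_trans (by positivity) (hK 0)
  have hderiv : ∀ t ∈ Icc (y - x) (y + x), ‖deriv u t‖ ≤ 8 * K / (1 + y) ^ 3 := by
    intro t ht
    have hyt : 1 + y ≤ 2 * (1 + |t|) := by linarith [ht.1, le_abs_self t, abs_nonneg t]
    rw [le_div_iff₀ (by positivity)]
    calc ‖deriv u t‖ * (1 + y) ^ 3 ≤ ‖deriv u t‖ * (2 * (1 + |t|)) ^ 3 := by gcongr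
      _ = 8 * ((1 + |t|) ^ 3 * ‖deriv u t‖) := by ring
      _ ≤ 8 * K := by gcongr; exact hK t
  have hmvt := (convex_Icc (y - x) (y + x)).norm_image_sub_le_of_norm_deriv_le
    (fun t _ => hu t) hderiv (left_mem_Icc.2 (by linarith)) (right_mem_Icc.2 (by linarith))
  rw [show y + x - (y - x) = 2 * x by ring, Real.norm_of_nonneg (by positivity)] at hmvt
  have hweight : y / (1 + y) ^ 3 ≤ (1 + y ^ 2)⁻¹ := by
    rw [div_le_iff₀ (by positivity), inv_mul_eq_div, le_div_iff₀ (by positivity)]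
    nlinarith [sq_nonneg y, pow_nonneg hy 3]
  calc ‖u (y + x) - u (y - x)‖ * y ≤ 8 * K / (1 + y) ^ 3 * (2 * x) * y := by gcongr
    _ = 16 * K * x * (y / (1 + y) ^ 3) := by ring
    _ ≤ 16 * K * x * (1 + y ^ 2)⁻¹ := by gcongr

theorem setIntegral_norm_sub_mul_le_of_le_one (hu : Differentiable ℝ u) {K : ℝ}
    (hK : ∀ t, (1 + |t|) ^ 3 * ‖deriv u t‖ ≤ K) (hx : 0 ≤ x) (hx1 : x ≤ 1) :
    ∫ y in Ioi (0 : ℝ), ‖u (y + x) - u (y - x)‖ * y ≤ 16 * π * K * x := by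
  have hK0 : 0 ≤ K := le_trans (by positivity) (hK 0)
  have hg : Integrable fun y : ℝ => 16 * K * x * (1 + y ^ 2)⁻¹ :=
    integrable_inv_one_add_sq.const_mul _
  calc ∫ y in Ioi (0 : ℝ), ‖u (y + x) - u (y - x)‖ * y
      ≤ ∫ y in Ioi (0 : ℝ), 16 * K * x * (1 + y ^ 2)⁻¹ :=
        setIntegral_mono_on_of_nonneg measurableSet_Ioi hg.integrableOn
          (fun y hy => mul_nonneg (norm_nonneg _) (le_of_lt hy))
          (fun y hy => norm_sub_mul_le_of_le_one hu hK hx hx1 (le_of_lt hy))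
    _ ≤ ∫ y, 16 * K * x * (1 + y ^ 2)⁻¹ :=
        setIntegral_le_integral hg (.of_forall fun y => by positivity)
    _ = 16 * π * K * x := by
        rw [integral_const_mul, integral_univ_inv_one_add_sq]
        ring

end ShiftedDifference

theorem stmt_5_general (φhat : SchwartzMap ℝ ℂ) :
    ∃ C : ℝ, 0 < C ∧ ∀ x : ℝ, 0 < x →
      ∫ y in Ioi (0:ℝ), ‖φhat (y + x) - φhat (y - x)‖ * y ≤ C * x := by
  obtain ⟨K, hK⟩ := φhat.exists_one_add_abs_pow_mul_norm_deriv_le 3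
  have hK0 : 0 ≤ K := le_trans (by positivity) (hK 0)
  set A := ∫ t, (1 + |t|) * ‖φhat t‖
  have hA : 0 ≤ A := integral_nonneg fun t => by positivity
  refine ⟨2 * A + 16 * π * K + 1, by positivity, fun x hx => ?_⟩
  rcases le_total x 1 with hx1 | hx1
  · calc _ ≤ 16 * π * K * x :=
          setIntegral_norm_sub_mul_le_of_le_one φhat.differentiable hK hx.le hx1
      _ ≤ _ := by nlinarith
  · calc _ ≤ 2 * x * A :=
          setIntegral_norm_sub_mul_le_of_one_le φhat.integrable_one_add_abs_mul_norm hx1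
      _ ≤ _ := by nlinarith [mul_nonneg (mul_nonneg pi_pos.le hK0) hx.le]

theorem stmt_5 (φhat : SchwartzMap ℝ ℂ) (heven : ∀ y : ℝ, φhat (-y) = φhat y) :
    ∃ C : ℝ, 0 < C ∧ ∀ x : ℝ, 0 < x →
      ∫ y in Ioi (0:ℝ), ‖φhat (y + x) - φhat (y - x)‖ * y ≤ C * x :=
  stmt_5_general φhat
end

section
/- Let f ∈ Ḣ¹₀(Ω) be radial on Ω = ℝ³\B(0,1) with ‖f‖_{Ḣ¹₀} ≤ A, and let φ_{>R}(x) = 1 − φ(x/R) with φ as above and R ≥ 1. Then ‖φ_{>R} f‖_{L^{10}(Ω)} ≤ C·A·R^{-1/5}. -/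
open MeasureTheory Set Filter

private lemma pt_bound (f f' : ℝ → ℂ) (A : ℝ)
    (hderiv : ∀ r, 1 ≤ r → HasDerivAt f (f' r) r)
    (hlim : Tendsto f atTop (nhds 0))
    (hint : IntegrableOn (fun r => ‖f' r‖ ^ 2 * r ^ 2) (Ioi (1:ℝ)))
    (hA2 : (∫ r in Ioi (1:ℝ), ‖f' r‖ ^ 2 * r ^ 2) ^ ((1:ℝ)/2) ≤ A)
    {r : ℝ} (hr : 1 ≤ r) : ‖f r‖ ≤ A * r ^ (-(1/2) : ℝ) := by
  set I := ∫ s in Ioi (1:ℝ), ‖f' s‖ ^ 2 * s ^ 2 with hIdef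
  have hI0 : 0 ≤ I := setIntegral_nonneg measurableSet_Ioi (fun x _ => by positivity)
  have hA0 : 0 ≤ A := le_trans (Real.rpow_nonneg hI0 _) hA2
  have hr0 : 0 < r := lt_of_lt_of_le one_pos hr
  have key : ∀ T, r ≤ T → ‖f r‖ ≤ ‖f T‖ + A * r ^ (-(1/2) : ℝ) := by
    intro T hT
    have hsub : Ioc r T ⊆ Ioi (1:ℝ) := fun s hs => lt_of_le_of_lt hr hs.1
    have hf'm : AEStronglyMeasurable f' (volume.restrict (Ioc r T)) := by
      refine (measurable_deriv f).aestronglyMeasurable.congr ?_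
      refine ae_restrict_of_forall_mem measurableSet_Ioc (fun s hs => ?_)
      exact (hderiv s (hr.trans hs.1.le)).deriv
    have hbig : IntegrableOn (fun s => ‖f' s‖ ^ 2 * s ^ 2) (Ioc r T) := hint.mono_set hsub
    have hone : IntegrableOn (fun _ : ℝ => (1:ℝ)) (Ioc r T) :=
      integrableOn_const measure_Ioc_lt_top.ne
    have hf'int : IntegrableOn f' (Ioc r T) := by
      refine (hone.add hbig).mono' hf'm ?_
      refine ae_restrict_of_forall_mem measurableSet_Ioc (fun s hs => ?_)
      have h1s : 1 ≤ s := hr.trans hs.1.le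
      have h1 : ‖f' s‖ ≤ 1 + ‖f' s‖ ^ 2 := by nlinarith [sq_nonneg (‖f' s‖ - 1)]
      have h2 : ‖f' s‖ ^ 2 ≤ ‖f' s‖ ^ 2 * s ^ 2 :=
        le_mul_of_one_le_right (sq_nonneg _) (by nlinarith)
      simp only [Pi.add_apply]
      linarith
    have hftc : ∫ s in r..T, f' s = f T - f r := by
      refine intervalIntegral.integral_eq_sub_of_hasDerivAt (fun s hs => ?_) ?_
      · rw [uIcc_of_le hT] at hs
        exact hderiv s (hr.trans hs.1)
      · exact (intervalIntegrable_iff_integrableOn_Ioc_of_le hT).2 hf'int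
    -- Cauchy-Schwarz on Ioc r T
    have hpq : Real.HolderConjugate 2 2 := Real.HolderConjugate.two_two
    set μ := volume.restrict (Ioc r T) with hμ
    have hF : AEStronglyMeasurable (fun s => ‖f' s‖ * s) μ :=
      hf'm.norm.mul aestronglyMeasurable_id
    have hFmem : MemLp (fun s => ‖f' s‖ * s) (ENNReal.ofReal 2) μ := by
      rw [show ENNReal.ofReal 2 = 2 by norm_num, memLp_two_iff_integrable_sq hF]
      have : (fun s : ℝ => (‖f' s‖ * s) ^ 2) = fun s => ‖f' s‖ ^ 2 * s ^ 2 := by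
        funext s; ring
      rw [this]; exact hbig
    have hGmem : MemLp (fun s : ℝ => s⁻¹) (ENNReal.ofReal 2) μ := by
      rw [show ENNReal.ofReal 2 = 2 by norm_num,
        memLp_two_iff_integrable_sq measurable_inv.aestronglyMeasurable]
      refine hone.mono' (measurable_inv.pow_const 2).aestronglyMeasurable ?_
      refine ae_restrict_of_forall_mem measurableSet_Ioc (fun s hs => ?_)
      have h1s : 1 ≤ s := hr.trans hs.1.le
      have h0s : 0 < s := lt_of_lt_of_le one_pos h1s
      have hle1 : s⁻¹ ≤ 1 := by
        rw [← one_div]; exact div_le_one_of_le₀ h1s h0s.le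
      have h0 : 0 ≤ s⁻¹ := inv_nonneg.2 h0s.le
      rw [Real.norm_eq_abs, abs_of_nonneg (by positivity)]
      nlinarith
    have hFnn : 0 ≤ᵐ[μ] fun s => ‖f' s‖ * s := by
      refine ae_restrict_of_forall_mem measurableSet_Ioc (fun s hs => ?_)
      have : (0:ℝ) < s := lt_of_lt_of_le one_pos (hr.trans hs.1.le)
      positivity
    have hGnn : 0 ≤ᵐ[μ] fun s : ℝ => s⁻¹ := by
      refine ae_restrict_of_forall_mem measurableSet_Ioc (fun s hs => ?_)
      have : (0:ℝ) < s := lt_of_lt_of_le one_pos (hr.trans hs.1.le)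
      positivity
    have hCS := integral_mul_le_Lp_mul_Lq_of_nonneg hpq hFnn hGnn hFmem hGmem
    have hL : ∫ s, (‖f' s‖ * s) * s⁻¹ ∂μ = ∫ s in Ioc r T, ‖f' s‖ := by
      refine integral_congr_ae (ae_restrict_of_forall_mem measurableSet_Ioc (fun s hs => ?_))
      have h0s : s ≠ 0 := (lt_of_lt_of_le one_pos (hr.trans hs.1.le)).ne'
      field_simp
    have hFnn2 : 0 ≤ᵐ[μ] fun s => (‖f' s‖ * s) ^ (2:ℝ) :=
      hFnn.mono (fun s hs => Real.rpow_nonneg hs _)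
    have hGnn2 : 0 ≤ᵐ[μ] fun s : ℝ => (s⁻¹) ^ (2:ℝ) :=
      hGnn.mono (fun s hs => Real.rpow_nonneg hs _)
    have hR1 : ∫ s, (‖f' s‖ * s) ^ (2:ℝ) ∂μ ≤ I := by
      have he : ∫ s, (‖f' s‖ * s) ^ (2:ℝ) ∂μ = ∫ s in Ioc r T, ‖f' s‖ ^ 2 * s ^ 2 := by
        refine integral_congr_ae (ae_of_all _ (fun s => ?_))
        show (‖f' s‖ * s) ^ (2:ℝ) = ‖f' s‖ ^ 2 * s ^ 2
        rw [Real.rpow_two]; ring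
      rw [he, hIdef]
      exact setIntegral_mono_set hint (ae_of_all _ (fun x => by positivity))
        (HasSubset.Subset.eventuallyLE hsub)
    have hR2 : ∫ s, (s⁻¹ : ℝ) ^ (2:ℝ) ∂μ ≤ r ^ (-1 : ℝ) := by
      have he : ∫ s, (s⁻¹ : ℝ) ^ (2:ℝ) ∂μ = ∫ s in Ioc r T, s ^ (-2 : ℝ) := by
        refine integral_congr_ae (ae_restrict_of_forall_mem measurableSet_Ioc (fun s hs => ?_))
        have h0s : (0:ℝ) ≤ s := (lt_of_lt_of_le one_pos (hr.trans hs.1.le)).le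
        show (s⁻¹) ^ (2:ℝ) = s ^ (-2:ℝ)
        rw [Real.inv_rpow h0s, ← Real.rpow_neg h0s]
      rw [he]
      have hmono : ∫ s in Ioc r T, s ^ (-2:ℝ) ≤ ∫ s in Ioi r, s ^ (-2:ℝ) := by
        refine setIntegral_mono_set (integrableOn_Ioi_rpow_of_lt (by norm_num) hr0) ?_ ?_
        · refine ae_restrict_of_forall_mem measurableSet_Ioi (fun s hs => ?_)
          exact Real.rpow_nonneg (le_of_lt (lt_trans hr0 hs)) _
        · exact HasSubset.Subset.eventuallyLE Ioc_subset_Ioi_self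
      have hval : ∫ s in Ioi r, s ^ (-2:ℝ) = r ^ (-1:ℝ) := by
        rw [integral_Ioi_rpow_of_lt (by norm_num) hr0]
        norm_num
      linarith
    have hfinal : ∫ s in Ioc r T, ‖f' s‖ ≤ A * r ^ (-(1/2) : ℝ) := by
      rw [← hL]
      refine le_trans hCS ?_
      have h1 : (∫ s, (‖f' s‖ * s) ^ (2:ℝ) ∂μ) ^ ((1:ℝ)/2) ≤ A :=
        le_trans (Real.rpow_le_rpow (integral_nonneg_of_ae hFnn2) hR1 (by norm_num)) hA2
      have h2 : (∫ s, ((s⁻¹ : ℝ)) ^ (2:ℝ) ∂μ) ^ ((1:ℝ)/2) ≤ r ^ (-(1/2) : ℝ) := by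
        refine le_trans (Real.rpow_le_rpow (integral_nonneg_of_ae hGnn2) hR2 (by norm_num)) ?_
        rw [← Real.rpow_mul hr0.le]
        norm_num
      have hp2 : (0:ℝ) ≤ (∫ s, ((s⁻¹ : ℝ)) ^ (2:ℝ) ∂μ) ^ ((1:ℝ)/2) :=
        Real.rpow_nonneg (integral_nonneg_of_ae hGnn2) _
      exact mul_le_mul h1 h2 hp2 hA0
    have hsplit : ‖f r‖ ≤ ‖f T‖ + ‖∫ s in r..T, f' s‖ := by
      have : f r = f T - ∫ s in r..T, f' s := by rw [hftc]; ring
      rw [this]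
      exact norm_sub_le _ _
    have hnorm : ‖∫ s in r..T, f' s‖ ≤ ∫ s in Ioc r T, ‖f' s‖ := by
      rw [intervalIntegral.integral_of_le hT]
      exact norm_integral_le_integral_norm _
    linarith
  have hnormlim : Tendsto (fun T => ‖f T‖) atTop (nhds 0) := by
    simpa using hlim.norm
  have htend : Tendsto (fun T => ‖f T‖ + A * r ^ (-(1/2):ℝ)) atTop
      (nhds (0 + A * r ^ (-(1/2):ℝ))) := hnormlim.add tendsto_const_nhds
  have := ge_of_tendsto htend ((eventually_ge_atTop r).mono key)
  simpa using this

/-- Decay of the exterior `L^{10}` norm: `‖φ_{>R} f‖_{L^{10}} ≤ C·A·R^{-1/5}`,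
for radial `f ∈ Ḣ¹₀(Ω)` with `‖f‖_{Ḣ¹₀} ≤ A`, in radial coordinates. -/
theorem stmt_13 :
    ∃ C : ℝ, 0 < C ∧
      ∀ (f f' : ℝ → ℂ) (φ : ℝ → ℝ) (R A : ℝ), 1 ≤ R → 0 < A →
        ContDiff ℝ (⊤ : ℕ∞) φ →
        (∀ x, x ≤ 1 → φ x = 1) → (∀ x, 2 ≤ x → φ x = 0) →
        (∀ x, 0 ≤ φ x ∧ φ x ≤ 1) →
        (∀ r, 1 ≤ r → HasDerivAt f (f' r) r) →
        f 1 = 0 → Tendsto f atTop (nhds 0) →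
        IntegrableOn (fun r => ‖f' r‖ ^ 2 * r ^ 2) (Ioi (1:ℝ)) →
        (∫ r in Ioi (1:ℝ), ‖f' r‖ ^ 2 * r ^ 2) ^ ((1:ℝ)/2) ≤ A →
        (∫ r in Ioi (1:ℝ), ‖(1 - φ (r / R)) • f r‖ ^ 10 * r ^ 2) ^ ((1:ℝ)/10)
          ≤ C * A * R ^ (-(1/5) : ℝ) := by
  refine ⟨1, one_pos, ?_⟩
  intro f f' φ R A hR hA hφ hφ1 hφ2 hφ01 hderiv hf1 hlim hint hA2
  have hA0 : 0 ≤ A := hA.le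
  have hR0 : 0 < R := lt_of_lt_of_le one_pos hR
  set g : ℝ → ℝ := (Ici R).indicator (fun r => A ^ 10 * r ^ (-3:ℝ)) with hgdef
  have hg_int : IntegrableOn g (Ioi (1:ℝ)) := by
    have h1 : IntegrableOn (fun r : ℝ => A ^ 10 * r ^ (-3:ℝ)) (Ioi R) :=
      (integrableOn_Ioi_rpow_of_lt (by norm_num) hR0).const_mul _
    have h2 : IntegrableOn (fun r : ℝ => A ^ 10 * r ^ (-3:ℝ)) (Ici R) := by
      rwa [integrableOn_Ici_iff_integrableOn_Ioi]
    exact (h2.integrable_indicator measurableSet_Ici).integrableOn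
  have hmono : ∀ r ∈ Ioi (1:ℝ), ‖(1 - φ (r / R)) • f r‖ ^ 10 * r ^ 2 ≤ g r := by
    intro r hr
    have hr1 : (1:ℝ) ≤ r := (le_of_lt hr)
    have hrp : (0:ℝ) < r := lt_of_lt_of_le one_pos hr1
    by_cases hcase : R ≤ r
    · have hmem : r ∈ Ici R := mem_Ici.2 hcase
      rw [hgdef, indicator_of_mem hmem]
      have h1 : ‖(1 - φ (r / R)) • f r‖ ≤ ‖f r‖ := by
        rw [norm_smul, Real.norm_eq_abs]
        have h01 := hφ01 (r / R)
        have habs : |1 - φ (r / R)| ≤ 1 := abs_le.2 ⟨by linarith [h01.2], by linarith [h01.1]⟩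
        calc |1 - φ (r / R)| * ‖f r‖ ≤ 1 * ‖f r‖ :=
              mul_le_mul_of_nonneg_right habs (norm_nonneg _)
          _ = ‖f r‖ := one_mul _
      have h2 : ‖f r‖ ≤ A * r ^ (-(1/2) : ℝ) :=
        pt_bound f f' A hderiv hlim hint hA2 hr1
      have h3 : ‖(1 - φ (r / R)) • f r‖ ^ 10 ≤ (A * r ^ (-(1/2) : ℝ)) ^ 10 :=
        pow_le_pow_left₀ (norm_nonneg _) (h1.trans h2) 10
      have h4 : ‖(1 - φ (r / R)) • f r‖ ^ 10 * r ^ 2 ≤ (A * r ^ (-(1/2) : ℝ)) ^ 10 * r ^ 2 :=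
        mul_le_mul_of_nonneg_right h3 (sq_nonneg r)
      refine h4.trans (le_of_eq ?_)
      rw [mul_pow, mul_assoc]
      congr 1
      rw [← Real.rpow_natCast (r ^ (-(1/2):ℝ)) 10, ← Real.rpow_mul hrp.le,
        ← Real.rpow_natCast r 2, ← Real.rpow_add hrp]
      norm_num
    · have hmem : r ∉ Ici R := by simpa using hcase
      rw [hgdef, indicator_of_notMem hmem]
      have hle : r / R ≤ 1 := (div_le_one hR0).2 (le_of_not_ge hcase)
      rw [hφ1 _ hle]
      simp
  have hle : (∫ r in Ioi (1:ℝ), ‖(1 - φ (r / R)) • f r‖ ^ 10 * r ^ 2)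
      ≤ ∫ r in Ioi (1:ℝ), g r := by
    refine integral_mono_of_nonneg (ae_of_all _ (fun r => by positivity)) hg_int ?_
    exact ae_restrict_of_forall_mem measurableSet_Ioi hmono
  have hval : ∫ r in Ioi (1:ℝ), g r = A ^ 10 * (R ^ (-2:ℝ) / 2) := by
    rw [hgdef, setIntegral_indicator measurableSet_Ici]
    have hae : ((Ioi (1:ℝ) ∩ Ici R : Set ℝ)) =ᵐ[volume] (Ioi R : Set ℝ) := by
      have h1 : (Ici R : Set ℝ) =ᵐ[volume] (Ioi R : Set ℝ) := Ioi_ae_eq_Ici.symm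
      have h2 : ((Ioi (1:ℝ) ∩ Ici R : Set ℝ)) =ᵐ[volume] ((Ioi (1:ℝ) ∩ Ioi R : Set ℝ)) :=
        (EventuallyEq.refl _ _).inter h1
      have h3 : ((Ioi (1:ℝ) ∩ Ioi R : Set ℝ)) = (Ioi R : Set ℝ) := by
        rw [Ioi_inter_Ioi, max_eq_right hR]
      rw [h3] at h2
      exact h2
    rw [setIntegral_congr_set hae, integral_const_mul,
      integral_Ioi_rpow_of_lt (by norm_num) hR0]
    norm_num
  have hnn : (0:ℝ) ≤ ∫ r in Ioi (1:ℝ), ‖(1 - φ (r / R)) • f r‖ ^ 10 * r ^ 2 :=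
    setIntegral_nonneg measurableSet_Ioi (fun r _ => by positivity)
  have hstep : (∫ r in Ioi (1:ℝ), ‖(1 - φ (r / R)) • f r‖ ^ 10 * r ^ 2) ^ ((1:ℝ)/10)
      ≤ (A ^ 10 * R ^ (-2:ℝ)) ^ ((1:ℝ)/10) := by
    refine Real.rpow_le_rpow hnn (hle.trans ?_) (by norm_num)
    rw [hval]
    have hh : (0:ℝ) ≤ A ^ 10 * R ^ (-2:ℝ) :=
      mul_nonneg (pow_nonneg hA0 10) (Real.rpow_nonneg hR0.le _)
    linarith
  refine hstep.trans (le_of_eq ?_)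
  rw [Real.mul_rpow (pow_nonneg hA0 10) (Real.rpow_nonneg hR0.le _),
    ← Real.rpow_natCast A 10, ← Real.rpow_mul hA0, ← Real.rpow_mul hR0.le]
  norm_num
end
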